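/- Let $M_\ell = \max_{1\le i\le \ell}|X_i|$ for i.i.d. standard normals, $a_\ell$ the unique positive solution of $1/\ell = \sqrt{2/\pi} e^{-a^2/2}/a$, $b_\ell = 1/a_\ell$, and $Y_\ell = (M_\ell - a_\ell)/b_\ell$. Then for every $y > 0$ and every $\ell \ge 1$, $\mathbb{P}(Y_\ell \ge y) \le e^{-y}$. -/

import Mathlib

/-! The event `Y ≥ y` is `M ≥ x` with `x = a + y / a`. By the union bound and the Mills-ratio bound
`ℙ(|N(0,1)| ≥ x) ≤ √(2/π) e^{-x²/2} / x`, its probability is at most `ℓ √(2/π) e^{-x²/2} / x`.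
Since `x ≥ a` and `x² ≥ a² + 2y`, this is at most `e^{-y} · ℓ √(2/π) e^{-a²/2} / a = e^{-y}`
by the defining equation of `a`. -/

open MeasureTheory ProbabilityTheory Real Set Filter Topology

lemma integrable_mul_exp_neg_sq_div_two : Integrable fun t : ℝ => t * exp (-t ^ 2 / 2) := by
  simpa [neg_div, div_eq_inv_mul] using integrable_mul_exp_neg_mul_sq (b := 1 / 2) (by norm_num)

lemma integrable_exp_neg_sq_div_two : Integrable fun t : ℝ => exp (-t ^ 2 / 2) := by
  simpa [neg_div, div_eq_inv_mul] using integrable_exp_neg_mul_sq (b := 1 / 2) (by norm_num)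

lemma integral_Ioi_mul_exp_neg_sq_div_two (x : ℝ) :
    ∫ t in Ioi x, t * exp (-t ^ 2 / 2) = exp (-x ^ 2 / 2) := by
  have hderiv (t : ℝ) : HasDerivAt (fun t : ℝ => -exp (-t ^ 2 / 2)) (t * exp (-t ^ 2 / 2)) t := by
    refine (((hasDerivAt_pow 2 t).neg.div_const 2).exp).neg.congr_deriv ?_
    simp only [Nat.cast_ofNat, Pi.neg_apply]
    ring
  have hlim : Tendsto (fun t : ℝ => -exp (-t ^ 2 / 2)) atTop (𝓝 0) := by
    have : Tendsto (fun t : ℝ => -t ^ 2 / 2) atTop atBot :=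
      (tendsto_neg_atTop_atBot.comp (tendsto_pow_atTop two_ne_zero)).atBot_div_const two_pos
    simpa using (tendsto_exp_atBot.comp this).neg
  simpa using integral_Ioi_of_hasDerivAt_of_tendsto' (fun t _ => hderiv t)
    integrable_mul_exp_neg_sq_div_two.integrableOn hlim

lemma integral_Ioi_exp_neg_sq_div_two_le {x : ℝ} (hx : 0 < x) :
    ∫ t in Ioi x, exp (-t ^ 2 / 2) ≤ exp (-x ^ 2 / 2) / x := by
  calc ∫ t in Ioi x, exp (-t ^ 2 / 2)
      ≤ ∫ t in Ioi x, t * exp (-t ^ 2 / 2) / x := by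
        refine setIntegral_mono_on integrable_exp_neg_sq_div_two.integrableOn
          (integrable_mul_exp_neg_sq_div_two.div_const x).integrableOn measurableSet_Ioi
          fun t ht => ?_
        rw [le_div_iff₀ hx, mul_comm]
        exact mul_le_mul_of_nonneg_right (le_of_lt ht) (exp_pos _).le
    _ = exp (-x ^ 2 / 2) / x := by
        rw [integral_div, integral_Ioi_mul_exp_neg_sq_div_two]

noncomputable def gaussianAbsTailBound (x : ℝ) : ℝ := √(2 / π) * exp (-x ^ 2 / 2) / x

lemma gaussianReal_Ici_le {x : ℝ} (hx : 0 < x) :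
    gaussianReal 0 1 (Ici x) ≤ ENNReal.ofReal (exp (-x ^ 2 / 2) / x / √(2 * π)) := by
  rw [gaussianReal_apply_eq_integral _ one_ne_zero, integral_Ici_eq_integral_Ioi]
  refine ENNReal.ofReal_le_ofReal ?_
  calc ∫ t in Ioi x, gaussianPDFReal 0 1 t
      = (∫ t in Ioi x, exp (-t ^ 2 / 2)) / √(2 * π) := by
        simp [gaussianPDFReal, div_eq_inv_mul, integral_const_mul]
    _ ≤ exp (-x ^ 2 / 2) / x / √(2 * π) := by
        gcongr
        exact integral_Ioi_exp_neg_sq_div_two_le hx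

lemma gaussianReal_abs_ge_le {x : ℝ} (hx : 0 < x) :
    gaussianReal 0 1 {t | x ≤ |t|} ≤ ENNReal.ofReal (gaussianAbsTailBound x) := by
  have hsymm : gaussianReal 0 1 ((fun t => -t) ⁻¹' Ici x) = gaussianReal 0 1 (Ici x) := by
    rw [← Measure.map_apply measurable_neg measurableSet_Ici, gaussianReal_map_neg, neg_zero]
  have hsplit : {t : ℝ | x ≤ |t|} = (fun t => -t) ⁻¹' Ici x ∪ Ici x := by
    ext t
    simp [le_abs', or_comm]
  have hconst : 2 / √(2 * π) = √(2 / π) := by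
    rw [eq_comm, sqrt_eq_iff_mul_self_eq (by positivity) (by positivity), div_mul_div_comm,
      mul_self_sqrt (by positivity)]
    field_simp
  calc gaussianReal 0 1 {t | x ≤ |t|}
      ≤ gaussianReal 0 1 (Ici x) + gaussianReal 0 1 (Ici x) := by
        rw [hsplit]
        exact (measure_union_le _ _).trans_eq (by rw [hsymm])
    _ ≤ ENNReal.ofReal (exp (-x ^ 2 / 2) / x / √(2 * π)) +
        ENNReal.ofReal (exp (-x ^ 2 / 2) / x / √(2 * π)) :=
        add_le_add (gaussianReal_Ici_le hx) (gaussianReal_Ici_le hx)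
    _ = ENNReal.ofReal (gaussianAbsTailBound x) := by
        rw [← ENNReal.ofReal_add (by positivity) (by positivity), gaussianAbsTailBound, ← hconst]
        ring_nf

lemma exp_neg_sq_add_div_le {a : ℝ} (ha : a ≠ 0) (y : ℝ) :
    exp (-(a + y / a) ^ 2 / 2) ≤ exp (-y) * exp (-a ^ 2 / 2) := by
  rw [← exp_add, exp_le_exp]
  have : (a + y / a) ^ 2 = a ^ 2 + 2 * y + (y / a) ^ 2 := by field_simp; ring
  nlinarith [sq_nonneg (y / a)]

lemma gaussianAbsTailBound_add_div_le {a y : ℝ} (ha : 0 < a) (hy : 0 ≤ y) :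
    gaussianAbsTailBound (a + y / a) ≤ exp (-y) * gaussianAbsTailBound a := by
  have hle : a ≤ a + y / a := le_add_of_nonneg_right (by positivity)
  calc gaussianAbsTailBound (a + y / a)
      ≤ √(2 / π) * (exp (-y) * exp (-a ^ 2 / 2)) / a := by
        unfold gaussianAbsTailBound
        gcongr
        exact exp_neg_sq_add_div_le ha.ne' y
    _ = exp (-y) * gaussianAbsTailBound a := by
        rw [gaussianAbsTailBound]
        ring

lemma measure_le_sup'_le_sum {Ω ι α : Type*} [MeasurableSpace Ω] [LinearOrder α]
    (μ : Measure Ω) (s : Finset ι) (hs : s.Nonempty) (f : ι → Ω → α) (c : α) :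
    μ {ω | c ≤ s.sup' hs (f · ω)} ≤ ∑ i ∈ s, μ {ω | c ≤ f i ω} := by
  refine (measure_mono fun ω hω => ?_).trans (measure_biUnion_finset_le s _)
  simpa [Finset.le_sup'_iff] using hω

open MeasureTheory ProbabilityTheory Real in
theorem gumbel_tail_bound_general
    {Ω : Type*} [MeasureSpace Ω] [IsProbabilityMeasure (ℙ : Measure Ω)]
    (ℓ : ℕ) (hℓ : 1 ≤ ℓ)
    (X : Fin ℓ → Ω → ℝ) (hX : ∀ i, Measurable (X i))
    (hXgauss : ∀ i, Measure.map (X i) ℙ = gaussianReal 0 1)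
    (M : Ω → ℝ)
    (hM : ∀ ω, M ω = Finset.univ.sup' (Finset.univ_nonempty_iff.mpr
      (Fin.pos_iff_nonempty.mp hℓ)) (fun i => |X i ω|))
    (a b : ℝ) (ha : 0 < a)
    (haeq : (1 : ℝ) / ℓ = Real.sqrt (2 / π) * Real.exp (-a^2 / 2) / a)
    (hb : b = 1 / a)
    (Y : Ω → ℝ) (hY : ∀ ω, Y ω = (M ω - a) / b)
    (y : ℝ) (hy : 0 < y) :
    ℙ {ω | Y ω ≥ y} ≤ ENNReal.ofReal (Real.exp (-y)) := by
  set x := a + y / a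
  have hx : 0 < x := by positivity
  have hevent : {ω | Y ω ≥ y} = {ω | x ≤ M ω} := by
    ext ω
    rw [mem_ofPred_eq, mem_ofPred_eq, hY, hb, div_div_eq_mul_div, div_one, ge_iff_le, ← div_le_iff₀ ha,
      ← le_sub_iff_add_le']
  have hlaw (i : Fin ℓ) : ℙ {ω | x ≤ |X i ω|} = gaussianReal 0 1 {t | x ≤ |t|} := by
    rw [← hXgauss i, Measure.map_apply (hX i) (measurableSet_le measurable_const measurable_abs)]
    rfl
  calc ℙ {ω | Y ω ≥ y}
      ≤ ∑ i, ℙ {ω | x ≤ |X i ω|} := by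
        simp only [hevent, hM]
        exact measure_le_sup'_le_sum ℙ _ _ _ x
    _ = ℓ * gaussianReal 0 1 {t | x ≤ |t|} := by simp [hlaw]
    _ ≤ ℓ * ENNReal.ofReal (exp (-y) * gaussianAbsTailBound a) := by
        gcongr
        exact (gaussianReal_abs_ge_le hx).trans
          (ENNReal.ofReal_le_ofReal (gaussianAbsTailBound_add_div_le ha hy.le))
    _ = ENNReal.ofReal (exp (-y)) := by
        have hℓ' : (0 : ℝ) < ℓ := by exact_mod_cast hℓ
        rw [gaussianAbsTailBound, ← haeq, ← ENNReal.ofReal_natCast, ← ENNReal.ofReal_mul hℓ'.le]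
        field_simp

open MeasureTheory ProbabilityTheory Real in
theorem gumbel_tail_bound
    {Ω : Type*} [MeasureSpace Ω] [IsProbabilityMeasure (ℙ : Measure Ω)]
    (ℓ : ℕ) (hℓ : 1 ≤ ℓ)
    (X : Fin ℓ → Ω → ℝ) (hX : ∀ i, Measurable (X i))
    (hindep : iIndepFun X ℙ)
    (hXgauss : ∀ i, Measure.map (X i) ℙ = gaussianReal 0 1)
    (M : Ω → ℝ)
    (hM : ∀ ω, M ω = Finset.univ.sup' (Finset.univ_nonempty_iff.mpr
      (Fin.pos_iff_nonempty.mp hℓ)) (fun i => |X i ω|))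
    (a b : ℝ) (ha : 0 < a)
    (haeq : (1 : ℝ) / ℓ = Real.sqrt (2 / π) * Real.exp (-a^2 / 2) / a)
    (hb : b = 1 / a)
    (Y : Ω → ℝ) (hY : ∀ ω, Y ω = (M ω - a) / b)
    (y : ℝ) (hy : 0 < y) :
    ℙ {ω | Y ω ≥ y} ≤ ENNReal.ofReal (Real.exp (-y)) :=
  gumbel_tail_bound_general ℓ hℓ X hX hXgauss M hM a b ha haeq hb Y hY y hy
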